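/- Let η = η₁ω¹ + η₂ω² + η_θ dθ be a closed 1-form on M² × S¹ lying in the kernel of the linearized deformation operator (dη = 0 and δη = 0, where δ is the first-order divergence-type operator δη = λ⁻¹[w^{ij} η_{i,j} + B^i η_i] whose coefficients are independent of θ). Then the component function z = η_θ satisfies the elliptic equation w^{ij} z_{ij} + A^i z_i = 0 on the compact manifold M² × S¹, and hence η_θ is constant. -/

import Mathlib

/-!
STATEMENT 15: On the compact manifold `M² × S¹` (modelled as the torus `ℝ³/ℤ³`,
with `θ` the third coordinate), let `η = η₁ω¹ + η₂ω² + η_θ dθ` be a closed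
1-form in the kernel of the linearized deformation operator:
`dη = 0` and `δη = λ⁻¹[w^{ij} η_{i,j} + B^i η_i] = 0`, where the coefficients
`w^{ij}, B^i, λ` are independent of `θ`.  Then `z = η_θ` satisfies the elliptic
equation `w^{ij} z_{ij} + B^i z_i = 0`, and hence `η_θ` is constant.
-/

noncomputable section

abbrev ee (i : Fin 3) : Fin 3 → ℝ := Pi.single i 1

def pd (i : Fin 3) (f : (Fin 3 → ℝ) → ℝ) (x : Fin 3 → ℝ) : ℝ :=
  fderiv ℝ f x (ee i)

abbrev E3 := Fin 3 → ℝ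

lemma contDiff_pd {f : E3 → ℝ} (hf : ContDiff ℝ (⊤ : ℕ∞) f) (i : Fin 3) :
    ContDiff ℝ (⊤ : ℕ∞) (pd i f) :=
  (ContinuousLinearMap.apply ℝ ℝ (ee i)).contDiff.comp (hf.fderiv_right (by simp))

lemma hasDerivAt_line {f : E3 → ℝ} (hf : Differentiable ℝ f) (x v : E3) (t : ℝ) :
    HasDerivAt (fun s : ℝ => f (x + s • v)) (fderiv ℝ f (x + t • v) v) t := by
  have hline : HasDerivAt (fun s : ℝ => x + s • v) v t := by
    simpa using ((hasDerivAt_id t).smul_const v).const_add x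
  have := (hf (x + t • v)).hasFDerivAt.comp_hasDerivAt t hline
  exact this

lemma fderiv_eq_sum_pd {f : E3 → ℝ} (hf : DifferentiableAt ℝ f x) (c : E3) :
    fderiv ℝ f x c = ∑ i, c i * pd i f x := by
  have hc : c = ∑ i, c i • ee i := by
    funext j
    simp [ee, Finset.sum_apply, Pi.single_apply]
  conv_lhs => rw [hc]
  rw [map_sum]
  simp [pd, smul_eq_mul]

lemma pd_comm {f : E3 → ℝ} (hf : ContDiff ℝ (⊤ : ℕ∞) f) (i j : Fin 3) (x : E3) :
    pd i (pd j f) x = pd j (pd i f) x := by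
  have hsymm : IsSymmSndFDerivAt ℝ f x := hf.contDiffAt.isSymmSndFDerivAt (by
    rw [minSmoothness_of_isRCLikeNormedField]; exact (WithTop.coe_le_coe.mpr (le_top : (2 : ℕ∞) ≤ ⊤) : ((2 : ℕ∞) : WithTop ℕ∞) ≤ _))
  have hd : DifferentiableAt ℝ (fderiv ℝ f) x :=
    ((hf.fderiv_right (m := (⊤ : ℕ∞)) ((by simp))).differentiable (by simp)).differentiableAt
  have key : ∀ k l : Fin 3, pd k (pd l f) x = fderiv ℝ (fderiv ℝ f) x (ee k) (ee l) := by
    intro k l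
    show fderiv ℝ (fun y => fderiv ℝ f y (ee l)) x (ee k) = _
    rw [fderiv_clm_apply hd (differentiableAt_const _)]
    simp
  rw [key i j, key j i, hsymm.eq]

lemma z_per_int {z : E3 → ℝ} (hper : ∀ x i, z (x + ee i) = z x) (k : ℤ) (i : Fin 3) (x : E3) :
    z (x + k • ee i) = z x := by
  induction k using Int.induction_on with
  | zero => simp
  | succ n ih =>
      have : x + ((n : ℤ) + 1) • ee i = (x + (n : ℤ) • ee i) + ee i := by
        push_cast
        module
      rw [this, hper, ih]
  | pred n ih =>
      have : x + (-(n : ℤ) - 1) • ee i + ee i = x + (-(n : ℤ)) • ee i := by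
        push_cast
        module
      rw [← ih, ← this, hper]

lemma z_eq_fract {z : E3 → ℝ} (hper : ∀ x i, z (x + ee i) = z x) (x : E3) :
    z x = z (fun i => Int.fract (x i)) := by
  have hx : x = (((fun i => Int.fract (x i)) + (⌊x 0⌋ : ℤ) • ee 0) + (⌊x 1⌋ : ℤ) • ee 1)
      + (⌊x 2⌋ : ℤ) • ee 2 := by
    funext i
    simp only [Pi.add_apply, Pi.smul_apply]
    fin_cases i <;>
    · norm_num [Pi.single_apply, zsmul_eq_mul, Fin.ext_iff]
      try exact (Int.fract_add_floor _).symm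
  conv_lhs => rw [hx]
  rw [z_per_int hper, z_per_int hper, z_per_int hper]

lemma exists_global_max {z : E3 → ℝ} (hz : Continuous z)
    (hper : ∀ x i, z (x + ee i) = z x) : ∃ p, ∀ x, z x ≤ z p := by
  obtain ⟨p, -, hmax⟩ := (isCompact_Icc (a := (0 : E3)) (b := 1)).exists_isMaxOn
    ⟨0, by simp⟩ hz.continuousOn
  refine ⟨p, fun x => ?_⟩
  rw [z_eq_fract hper x]
  refine hmax ?_
  constructor
  · intro i
    exact Int.fract_nonneg _
  · intro i
    exact (Int.fract_lt_one _).le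

lemma sum_w_H_nonpos {w : Matrix (Fin 3) (Fin 3) ℝ} (hw : w.PosSemidef)
    {H : Fin 3 → Fin 3 → ℝ}
    (hH : ∀ c : Fin 3 → ℝ, (∑ i, ∑ j, c i * c j * H i j) ≤ 0) :
    (∑ i, ∑ j, w i j * H i j) ≤ 0 := by
  obtain ⟨A, hA⟩ : ∃ A : Matrix (Fin 3) (Fin 3) ℝ, w = A.conjTranspose * A := by
    open scoped MatrixOrder in
    obtain ⟨B, hB⟩ := CStarAlgebra.nonneg_iff_eq_star_mul_self.mp hw.nonneg
    exact ⟨B, hB⟩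
  have step1 : (∑ i, ∑ j, w i j * H i j) = ∑ i, ∑ j, ∑ k, A k i * A k j * H i j := by
    refine Finset.sum_congr rfl fun i _ => Finset.sum_congr rfl fun j _ => ?_
    rw [hA]
    simp [Matrix.mul_apply, Matrix.conjTranspose_apply, Finset.sum_mul]
  have step2 : ∀ i : Fin 3, (∑ j, ∑ k, A k i * A k j * H i j)
      = ∑ k, ∑ j, A k i * A k j * H i j := fun i => Finset.sum_comm
  rw [step1]
  simp_rw [step2]
  rw [Finset.sum_comm]
  exact Finset.sum_nonpos fun k _ => hH (fun i => A k i)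

lemma isLocalMax_slope_nonpos {φ : ℝ → ℝ} {c : ℝ} (hd : HasDerivAt φ c 0)
    (h : ∀ t ∈ Set.Ioo (0 : ℝ) (1/2 : ℝ), φ t ≤ φ 0) : c ≤ 0 := by
  have htend : Filter.Tendsto (slope φ 0) (nhdsWithin 0 (Set.Ioi 0)) (nhds c) :=
    (hasDerivAt_iff_tendsto_slope.mp hd).mono_left
      (nhdsWithin_mono 0 (fun t ht => ne_of_gt (Set.mem_Ioi.mp ht)))
  refine le_of_tendsto htend ?_
  filter_upwards [Ioo_mem_nhdsGT_of_mem
    (Set.mem_Ico.mpr ⟨le_refl (0:ℝ), (by norm_num : (0:ℝ) < 1/2)⟩)]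
    with t ht
  rw [slope_def_field]
  have h1 : φ t - φ 0 ≤ 0 := sub_nonpos.mpr (h t ht)
  have h2 : 0 < t - 0 := by simpa using ht.1
  exact div_nonpos_of_nonpos_of_nonneg h1 (by linarith)

lemma isLocalMax_quadform_nonpos {f : E3 → ℝ} (hf : ContDiff ℝ (⊤ : ℕ∞) f) {q : E3}
    (hq : IsLocalMax f q) (c : E3) :
    (∑ i, ∑ j, c i * c j * pd j (pd i f) q) ≤ 0 := by
  by_contra hpos
  push_neg at hpos
  have hdiff : Differentiable ℝ f := hf.differentiable (by simp)
  set G : ℝ → ℝ := fun t => ∑ i, c i * pd i f (q + t • c) with hG_def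
  set g : ℝ → ℝ := fun t => f (q + t • c) with hg_def
  have hg : ∀ t, HasDerivAt g (G t) t := by
    intro t
    have h1 := hasDerivAt_line hdiff q c t
    rwa [fderiv_eq_sum_pd (hdiff _) c] at h1
  have hGd : HasDerivAt G (∑ i, c i * ∑ j, c j * pd j (pd i f) q) 0 := by
    refine HasDerivAt.fun_sum fun i _ => ?_
    have h1 := hasDerivAt_line ((contDiff_pd hf i).differentiable (by simp)) q c 0
    rw [fderiv_eq_sum_pd ((contDiff_pd hf i).differentiable (by simp) _) c] at h1
    simp only [zero_smul, add_zero] at h1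
    exact h1.const_mul (c i)
  have hS : 0 < ∑ i, c i * ∑ j, c j * pd j (pd i f) q := by
    have : (∑ i, ∑ j, c i * c j * pd j (pd i f) q)
        = ∑ i, c i * ∑ j, c j * pd j (pd i f) q := by
      refine Finset.sum_congr rfl fun i _ => ?_
      rw [Finset.mul_sum]
      exact Finset.sum_congr rfl fun j _ => by ring
    linarith [this ▸ hpos]
  -- local max of g at 0
  have hgmax : IsLocalMax g 0 := by
    have hcont : Filter.Tendsto (fun t : ℝ => q + t • c) (nhds 0) (nhds q) := by
      have : Continuous (fun t : ℝ => q + t • c) := by continuity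
      have h0 : q + (0:ℝ) • c = q := by simp
      simpa [h0] using this.tendsto 0
    have hev2 := hcont.eventually hq
    refine hev2.mono fun t ht => ?_
    show g t ≤ g 0
    simpa [hg_def] using ht
  have hG0 : G 0 = 0 := by
    have h1 : deriv g 0 = 0 := hgmax.deriv_eq_zero
    rw [(hg 0).deriv] at h1
    exact h1
  -- G is eventually positive on the right
  have htend : Filter.Tendsto (slope G 0) (nhdsWithin 0 (Set.Ioi 0))
      (nhds (∑ i, c i * ∑ j, c j * pd j (pd i f) q)) :=
    (hasDerivAt_iff_tendsto_slope.mp hGd).mono_left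
      (nhdsWithin_mono 0 (fun t ht => ne_of_gt (Set.mem_Ioi.mp ht)))
  have hev : ∀ᶠ t in nhdsWithin 0 (Set.Ioi 0), 0 < G t := by
    have := htend.eventually (eventually_gt_nhds hS)
    filter_upwards [this, self_mem_nhdsWithin] with t h1 h2
    rw [slope_def_field, hG0, sub_zero, sub_zero] at h1
    have h3 : 0 < t := Set.mem_Ioi.mp h2
    calc (0:ℝ) = 0 * t := by ring
    _ < (G t / t) * t := by exact mul_lt_mul_of_pos_right h1 h3
    _ = G t := by field_simp
  obtain ⟨δ, hδ0, hδ⟩ := (nhdsGT_basis_of_exists_gt (⟨1, by norm_num⟩ : ∃ b : ℝ, (0:ℝ) < b)).eventually_iff.mp hev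
  -- local max of g gives smallness window
  obtain ⟨ε, hε0, hεball⟩ := Metric.eventually_nhds_iff_ball.mp hgmax
  set t₀ : ℝ := min δ ε / 2 with ht₀def
  have ht₀pos : 0 < t₀ := by positivity
  have hmono : StrictMonoOn g (Set.Icc 0 t₀) := by
    refine strictMonoOn_of_deriv_pos (convex_Icc _ _) ?_ ?_
    · exact ((hdiff.comp (by fun_prop : Differentiable ℝ (fun t : ℝ => q + t • c))).continuous).continuousOn
    · intro t ht
      rw [interior_Icc] at ht
      rw [(hg t).deriv]
      refine hδ ⟨ht.1, lt_trans ht.2 ?_⟩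
      calc t₀ ≤ δ / 2 := by
            apply div_le_div_of_nonneg_right (min_le_left _ _) (by norm_num)
      _ < δ := by linarith
  have hlt : g 0 < g t₀ := hmono (Set.left_mem_Icc.mpr ht₀pos.le)
    (Set.right_mem_Icc.mpr ht₀pos.le) ht₀pos
  have hle : g t₀ ≤ g 0 := by
    refine hεball t₀ ?_
    rw [Metric.mem_ball, Real.dist_eq, sub_zero, abs_of_pos ht₀pos]
    calc t₀ ≤ ε / 2 := by
          apply div_le_div_of_nonneg_right (min_le_right _ _) (by norm_num)
    _ < ε := by linarith
  linarith

lemma isLocalMax_elliptic {v : E3 → ℝ} (hv : ContDiff ℝ (⊤ : ℕ∞) v) {q : E3}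
    (w : Matrix (Fin 3) (Fin 3) ℝ) (hw : w.PosSemidef) (Bq : Fin 3 → ℝ)
    (hq : IsLocalMax v q) :
    (∑ i, ∑ j, w i j * pd j (pd i v) q) + ∑ i, Bq i * pd i v q ≤ 0 := by
  have h1 : ∀ i, pd i v q = 0 := fun i => by rw [pd, hq.fderiv_eq_zero]; simp
  have h2 := sum_w_H_nonpos hw (H := fun i j => pd j (pd i v) q)
    (fun c => isLocalMax_quadform_nonpos hv hq c)
  have h3 : (∑ i, Bq i * pd i v q) = 0 := by simp [h1]
  rw [h3, add_zero]
  exact h2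

def bar (y : E3) (α : ℝ) : E3 → ℝ := fun x => Real.exp (-(α * ∑ i, (x i - y i)^2))

lemma d_contDiff (y : E3) : ContDiff ℝ (⊤ : ℕ∞) (fun z : E3 => ∑ i, (z i - y i)^2) := by
  refine ContDiff.sum fun i _ => ?_
  exact ((ContinuousLinearMap.proj i : E3 →L[ℝ] ℝ).contDiff.sub contDiff_const).pow 2

lemma bar_contDiff (y : E3) (α : ℝ) : ContDiff ℝ (⊤ : ℕ∞) (bar y α) :=
  Real.contDiff_exp.comp ((contDiff_const.mul (d_contDiff y)).neg)

lemma d_hasFDerivAt (y x : E3) :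
    HasFDerivAt (fun z : E3 => ∑ i, (z i - y i)^2)
      (∑ i : Fin 3, (2*(x i - y i)) • (ContinuousLinearMap.proj i : E3 →L[ℝ] ℝ)) x := by
  refine HasFDerivAt.fun_sum fun i _ => ?_
  have h1 : HasFDerivAt (fun z : E3 => z i - y i)
      (ContinuousLinearMap.proj i : E3 →L[ℝ] ℝ) x :=
    (ContinuousLinearMap.proj i : E3 →L[ℝ] ℝ).hasFDerivAt.sub_const (y i)
  have h2 := h1.mul h1
  have hfun : (fun z : E3 => (z i - y i)^2) = fun z : E3 => (z i - y i) * (z i - y i) := by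
    funext z; ring
  rw [hfun]
  refine h2.congr_fderiv (Eq.symm ?_)
  rw [← add_smul]
  congr 1
  ring

lemma bar_hasFDerivAt (y : E3) (α : ℝ) (x : E3) :
    HasFDerivAt (bar y α)
      ((bar y α x * (-α)) • (∑ i : Fin 3, (2*(x i - y i)) • (ContinuousLinearMap.proj i : E3 →L[ℝ] ℝ))) x := by
  have hw : HasFDerivAt (fun z : E3 => -(α * ∑ i, (z i - y i)^2))
      (-(α • (∑ i : Fin 3, (2*(x i - y i)) • (ContinuousLinearMap.proj i : E3 →L[ℝ] ℝ)))) x :=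
    ((d_hasFDerivAt y x).const_mul α).neg
  have h2 := (Real.hasDerivAt_exp (-(α * ∑ i, (x i - y i)^2))).comp_hasFDerivAt x hw
  have h3 : bar y α x = Real.exp (-(α * ∑ i, (x i - y i)^2)) := rfl
  refine h2.congr_fderiv (Eq.symm ?_)
  rw [smul_neg, smul_smul, ← neg_smul, h3]
  congr 1
  ring

lemma proj_apply_ee (i j : Fin 3) :
    (ContinuousLinearMap.proj i : E3 →L[ℝ] ℝ) (ee j) = if i = j then 1 else 0 := by
  by_cases h : i = j
  · subst h; simp [ee]
  · simp [ee, Pi.single_eq_of_ne h, h]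

lemma bar_pd (y : E3) (α : ℝ) (x : E3) (j : Fin 3) :
    pd j (bar y α) x = bar y α x * (-(2*α) * (x j - y j)) := by
  rw [pd, (bar_hasFDerivAt y α x).fderiv]
  rw [ContinuousLinearMap.smul_apply, ContinuousLinearMap.sum_apply]
  simp_rw [ContinuousLinearMap.smul_apply, proj_apply_ee]
  rw [Finset.sum_eq_single j]
  · simp; ring
  · intro b _ hb; simp [hb]
  · intro h; exact absurd (Finset.mem_univ j) h

lemma bar_pd_pd (y : E3) (α : ℝ) (x : E3) (i j : Fin 3) :
    pd i (pd j (bar y α)) x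
      = bar y α x * ((2*α*(x i - y i)) * (2*α*(x j - y j)))
        - bar y α x * (2*α) * (if i = j then 1 else 0) := by
  have hfun : pd j (bar y α) = fun z => bar y α z * (-(2*α) * (z j - y j)) :=
    funext fun z => bar_pd y α z j
  rw [hfun]
  have h2 : HasFDerivAt (fun z : E3 => -(2*α) * (z j - y j))
      ((-(2*α)) • (ContinuousLinearMap.proj j : E3 →L[ℝ] ℝ)) x :=
    ((ContinuousLinearMap.proj j : E3 →L[ℝ] ℝ).hasFDerivAt.sub_const (y j)).const_mul (-(2*α))
  have h3 := (bar_hasFDerivAt y α x).mul h2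
  rw [pd, show (fun z => bar y α z * (-(2*α) * (z j - y j))) = (bar y α * fun z => -(2*α) * (z j - y j)) from rfl, h3.fderiv]
  simp only [ContinuousLinearMap.add_apply, ContinuousLinearMap.smul_apply,
    ContinuousLinearMap.sum_apply, proj_apply_ee, smul_eq_mul, mul_ite, mul_one, mul_zero]
  by_cases h : i = j
  · subst h; simp [Finset.sum_ite_eq']; ring
  · simp [Finset.sum_ite_eq', h, Ne.symm h]; ring

lemma bar_L (y : E3) (α : ℝ) (w : Matrix (Fin 3) (Fin 3) ℝ) (Bx : Fin 3 → ℝ) (x : E3) :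
    (∑ i, ∑ j, w i j * pd j (pd i (bar y α)) x) + ∑ i, Bx i * pd i (bar y α) x
    = bar y α x * (2*α) * ((2*α) * (∑ i, ∑ j, w i j * (x i - y i) * (x j - y j))
        - (∑ i, w i i) - ∑ i, Bx i * (x i - y i)) := by
  have e1 : ∀ i : Fin 3, (∑ j, w i j * pd j (pd i (bar y α)) x)
      = bar y α x * (4*α^2) * (∑ j, w i j * (x i - y i) * (x j - y j))
        - bar y α x * (2*α) * w i i := by
    intro i
    have hterm : ∀ j : Fin 3, w i j * pd j (pd i (bar y α)) x
        = bar y α x * (4*α^2) * (w i j * (x i - y i) * (x j - y j))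
          - (if j = i then bar y α x * (2*α) * w i j else 0) := by
      intro j
      rw [bar_pd_pd]
      by_cases h : j = i
      · subst h; simp; ring
      · simp [h, Ne.symm h]; ring
    rw [Finset.sum_congr rfl (fun j _ => hterm j), Finset.sum_sub_distrib, ← Finset.mul_sum,
      Finset.sum_ite_eq' Finset.univ i (fun j => bar y α x * (2*α) * w i j)]
    simp
  have e2 : (∑ i, ∑ j, w i j * pd j (pd i (bar y α)) x)
      = bar y α x * (4*α^2) * (∑ i, ∑ j, w i j * (x i - y i) * (x j - y j))
        - bar y α x * (2*α) * (∑ i, w i i) := by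
    rw [Finset.sum_congr rfl (fun i _ => e1 i), Finset.sum_sub_distrib, ← Finset.mul_sum,
      ← Finset.mul_sum]
  have e3 : (∑ i, Bx i * pd i (bar y α) x)
      = -(bar y α x * (2*α) * (∑ i, Bx i * (x i - y i))) := by
    have hterm : ∀ i : Fin 3, Bx i * pd i (bar y α) x
        = -(bar y α x * (2*α) * (Bx i * (x i - y i))) := by
      intro i; rw [bar_pd]; ring
    rw [Finset.sum_congr rfl (fun i _ => hterm i), Finset.sum_neg_distrib, ← Finset.mul_sum]
  rw [e2, e3]
  ring

lemma sum_split (f g : Fin 3 → ℝ) (c : ℝ) :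
    (∑ i, (f i + c * g i)) = (∑ i, f i) + c * ∑ i, g i := by
  rw [Finset.sum_add_distrib, Finset.mul_sum]

theorem elliptic_const (z : E3 → ℝ) (hz : ContDiff ℝ (⊤ : ℕ∞) z)
    (hper : ∀ x i, z (x + ee i) = z x)
    (w : E3 → Matrix (Fin 3) (Fin 3) ℝ) (B : E3 → Fin 3 → ℝ)
    (hw : ∀ i j, Continuous fun x => w x i j) (hwpos : ∀ x, (w x).PosDef)
    (hB : ∀ i, Continuous fun x => B x i)
    (heq : ∀ x, (∑ i, ∑ j, w x i j * pd j (pd i z) x) + ∑ i, B x i * pd i z x = 0) :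
    ∃ k, ∀ x, z x = k := by
  obtain ⟨pmax, hpmax⟩ := exists_global_max (hz.continuous) hper
  refine ⟨z pmax, fun y₀ => ?_⟩
  by_contra hne
  have hylt : z y₀ < z pmax := lt_of_le_of_ne (hpmax y₀) hne
  set M := z pmax with hM
  set d : E3 → ℝ := fun x => ∑ i, (x i - y₀ i)^2 with hd_def
  have hdcont : Continuous d := by
    apply continuous_finset_sum
    intro i _
    exact ((continuous_apply i).sub continuous_const).pow 2
  have hdnonneg : ∀ x, 0 ≤ d x := fun x => Finset.sum_nonneg fun i _ => sq_nonneg _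
  have hsub_compact : ∀ r : ℝ, IsCompact {x : E3 | d x ≤ r} := by
    intro r
    refine IsCompact.of_isClosed_subset (isCompact_closedBall y₀ (Real.sqrt r))
      (isClosed_le hdcont continuous_const) ?_
    intro x hx
    rw [Set.mem_setOf] at hx
    rw [Metric.mem_closedBall]
    refine (dist_pi_le_iff (Real.sqrt_nonneg r)).mpr fun i => ?_
    rw [Real.dist_eq]
    have h1 : (x i - y₀ i)^2 ≤ r :=
      le_trans (Finset.single_le_sum (f := fun i => (x i - y₀ i)^2)
        (fun i _ => sq_nonneg _) (Finset.mem_univ i)) hx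
    calc |x i - y₀ i| = Real.sqrt ((x i - y₀ i)^2) := (Real.sqrt_sq_eq_abs _).symm
    _ ≤ Real.sqrt r := Real.sqrt_le_sqrt h1
  have hKcl : IsClosed {x : E3 | z x = M ∧ d x ≤ d pmax} :=
    (isClosed_eq hz.continuous continuous_const).inter (isClosed_le hdcont continuous_const)
  have hKcomp : IsCompact {x : E3 | z x = M ∧ d x ≤ d pmax} :=
    (hsub_compact (d pmax)).of_isClosed_subset hKcl (fun x hx => hx.2)
  obtain ⟨p, hpK, hpmin⟩ := hKcomp.exists_isMinOn ⟨pmax, rfl, le_refl _⟩ hdcont.continuousOn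
  set ρ := d p with hρ
  have hρmin : ∀ s, z s = M → ρ ≤ d s := by
    intro s hs
    rcases le_or_gt (d s) (d pmax) with hcase | hcase
    · exact isMinOn_iff.mp hpmin s (Set.mem_setOf.mpr ⟨hs, hcase⟩)
    · exact le_trans (isMinOn_iff.mp hpmin pmax (Set.mem_setOf.mpr ⟨rfl, le_refl _⟩)) hcase.le
  have hρpos : 0 < ρ := by
    rcases (hdnonneg p).lt_or_eq with h | h
    · exact h
    · exfalso
      have hpy : p = y₀ := by
        funext i
        have h1 : (p i - y₀ i)^2 ≤ ρ := Finset.single_le_sum (f := fun i => (p i - y₀ i)^2)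
          (fun i _ => sq_nonneg _) (Finset.mem_univ i)
        have h2 : (p i - y₀ i)^2 = 0 := le_antisymm (by linarith) (sq_nonneg _)
        have h3 : p i - y₀ i = 0 := by
          exact pow_eq_zero_iff (by norm_num : (2:ℕ) ≠ 0) |>.mp h2
        linarith
      exact (ne_of_lt hylt) (hpy ▸ hpK.1)
  have hball : ∀ x, d x < ρ → z x < M := by
    intro x hx
    rcases (hpmax x).lt_or_eq with h | h
    · exact h
    · exact absurd (hρmin x h) (not_le.mpr hx)
  set A : Set E3 := {x : E3 | ρ/4 ≤ d x ∧ d x ≤ ρ} with hA_def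
  have hAcl : IsClosed A :=
    (isClosed_le continuous_const hdcont).inter (isClosed_le hdcont continuous_const)
  have hAcomp : IsCompact A := (hsub_compact ρ).of_isClosed_subset hAcl (fun x hx => hx.2)
  have hpA : p ∈ A := ⟨by rw [← hρ]; linarith, by rw [← hρ]⟩
  have hAne : A.Nonempty := ⟨p, hpA⟩
  set Q : E3 → ℝ := fun x => ∑ i, ∑ j, w x i j * (x i - y₀ i) * (x j - y₀ j) with hQ_def
  have hQcont : Continuous Q := by
    apply continuous_finset_sum; intro i _
    apply continuous_finset_sum; intro j _
    exact ((hw i j).mul ((continuous_apply i).sub continuous_const)).mul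
      ((continuous_apply j).sub continuous_const)
  have hQpos : ∀ x ∈ A, 0 < Q x := by
    intro x hx
    have hv0 : (fun i => x i - y₀ i) ≠ 0 := by
      intro hv
      have hdx : d x = 0 := by
        show (∑ i, (x i - y₀ i)^2) = 0
        apply Finset.sum_eq_zero; intro i _
        have : x i - y₀ i = 0 := congrFun hv i
        rw [this]; norm_num
      have := hx.1
      rw [hdx] at this
      linarith
    have hpd := (hwpos x).dotProduct_mulVec_pos (x := fun i => x i - y₀ i) hv0
    have hQeq : Q x = dotProduct (star fun i => x i - y₀ i)
        ((w x).mulVec fun i => x i - y₀ i) := by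
      show (∑ i, ∑ j, w x i j * (x i - y₀ i) * (x j - y₀ j)) = _
      rw [dotProduct]
      refine Finset.sum_congr rfl fun i _ => ?_
      rw [Matrix.mulVec, dotProduct, Finset.mul_sum]
      refine Finset.sum_congr rfl fun j _ => ?_
      simp [mul_comm, mul_left_comm, mul_assoc]
    rw [hQeq]
    exact hpd
  obtain ⟨xQ, hxQA, hxQmin⟩ := hAcomp.exists_isMinOn hAne hQcont.continuousOn
  set c₀ := Q xQ with hc₀
  have hc₀pos : 0 < c₀ := hQpos xQ hxQA
  set R : E3 → ℝ := fun x => (∑ i, w x i i) + ∑ i, B x i * (x i - y₀ i) with hR_def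
  have hRcont : Continuous R := by
    apply Continuous.add
    · apply continuous_finset_sum; intro i _; exact hw i i
    · apply continuous_finset_sum; intro i _
      exact (hB i).mul ((continuous_apply i).sub continuous_const)
  obtain ⟨xR, hxRA, hxRmax⟩ := hAcomp.exists_isMaxOn hAne hRcont.continuousOn
  set K₀ := R xR with hK₀
  set α := (|K₀| + 1) / (2 * c₀) with hα_def
  have hαpos : 0 < α := by positivity
  have hαkey : ∀ x ∈ A, 0 < (2*α) * Q x - (∑ i, w x i i) - ∑ i, B x i * (x i - y₀ i) := by
    intro x hx
    have h1 : c₀ ≤ Q x := isMinOn_iff.mp hxQmin x hx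
    have h2 : R x ≤ K₀ := isMaxOn_iff.mp hxRmax x hx
    have h3 : (2*α) * c₀ = |K₀| + 1 := by
      rw [hα_def]; field_simp
    have h4 : (2*α)*c₀ ≤ (2*α) * Q x := by nlinarith
    have h5 := le_abs_self K₀
    have hRx : (∑ i, w x i i) + ∑ i, B x i * (x i - y₀ i) = R x := rfl
    linarith
  have hLbar : ∀ x ∈ A, 0 < (∑ i, ∑ j, w x i j * pd j (pd i (bar y₀ α)) x)
      + ∑ i, B x i * pd i (bar y₀ α) x := by
    intro x hx
    rw [bar_L]
    have hbarpos : 0 < bar y₀ α x := Real.exp_pos _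
    have hk := hαkey x hx
    have h2α : 0 < 2*α := by linarith
    exact mul_pos (mul_pos hbarpos h2α) hk
  have hC1comp : IsCompact {x : E3 | d x ≤ ρ/4} := hsub_compact _
  have hy₀C1 : y₀ ∈ {x : E3 | d x ≤ ρ/4} := by
    have hdy : d y₀ = 0 := by
      show (∑ i, (y₀ i - y₀ i)^2) = 0
      apply Finset.sum_eq_zero; intro i _; norm_num
    rw [Set.mem_setOf, hdy]; linarith
  obtain ⟨q₁, hq₁, hq₁max⟩ := hC1comp.exists_isMaxOn ⟨y₀, hy₀C1⟩ hz.continuous.continuousOn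
  set m₁ := z q₁ with hm₁
  have hm₁lt : m₁ < M := by
    refine hball q₁ ?_
    have := hq₁
    rw [Set.mem_setOf] at this
    linarith
  set hsup := Real.exp (-(α * (ρ/4))) with hhsup
  have hsuppos : 0 < hsup := Real.exp_pos _
  set ε := (M - m₁) / (2 * hsup) with hε_def
  have hεpos : 0 < ε := div_pos (by linarith) (by positivity)
  set C := Real.exp (-(α * ρ)) with hCdef
  have hCpos : 0 < C := Real.exp_pos _
  set v : E3 → ℝ := fun x => z x + ε * (bar y₀ α x - C) with hv_def
  have hvsmooth : ContDiff ℝ (⊤ : ℕ∞) v :=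
    hz.add (contDiff_const.mul ((bar_contDiff y₀ α).sub contDiff_const))
  have hv_has : ∀ x : E3, HasFDerivAt v (fderiv ℝ z x + ε • fderiv ℝ (bar y₀ α) x) x := by
    intro x
    exact ((hz.differentiable (by simp) x).hasFDerivAt).add
      ((((bar_contDiff y₀ α).differentiable (by simp) x).hasFDerivAt.sub_const C).const_mul ε)
  have hvpd : ∀ i x, pd i v x = pd i z x + ε * pd i (bar y₀ α) x := by
    intro i x
    rw [pd, (hv_has x).fderiv]
    simp [pd]
  have hvpd2 : ∀ i j x, pd j (pd i v) x = pd j (pd i z) x + ε * pd j (pd i (bar y₀ α)) x := by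
    intro i j x
    have hvpdf : pd i v = fun x => pd i z x + ε * pd i (bar y₀ α) x := funext (hvpd i)
    rw [hvpdf, pd]
    have h1 : HasFDerivAt (fun x => pd i z x + ε * pd i (bar y₀ α) x)
        (fderiv ℝ (pd i z) x + ε • fderiv ℝ (pd i (bar y₀ α)) x) x :=
      (((contDiff_pd hz i).differentiable (by simp) x).hasFDerivAt).add
        ((((contDiff_pd (bar_contDiff y₀ α) i).differentiable (by simp) x).hasFDerivAt).const_mul ε)
    rw [h1.fderiv]
    simp [pd]
  have hvle : ∀ x ∈ A, v x ≤ M := by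
    obtain ⟨q, hqA, hqmax⟩ := hAcomp.exists_isMaxOn hAne hvsmooth.continuous.continuousOn
    have hqle : v q ≤ M := by
      by_contra hgt
      push_neg at hgt
      rcases eq_or_lt_of_le hqA.2 with hdq | hdq
      · have hbq : bar y₀ α q = C := by
          show Real.exp (-(α * ∑ i, (q i - y₀ i)^2)) = C
          rw [hCdef, show (∑ i, (q i - y₀ i)^2) = ρ from hdq]
        have hvq : v q = z q := by
          show z q + ε * (bar y₀ α q - C) = z q
          rw [hbq]; ring
        have := hpmax q
        rw [hvq] at hgt
        linarith
      rcases eq_or_lt_of_le hqA.1 with hdq4 | hdq4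
      · have h1 : z q ≤ m₁ := isMaxOn_iff.mp hq₁max q (by rw [Set.mem_setOf]; rw [← hdq4])
        have h2 : bar y₀ α q ≤ hsup := by
          show Real.exp (-(α * ∑ i, (q i - y₀ i)^2)) ≤ hsup
          rw [hhsup, show (∑ i, (q i - y₀ i)^2) = ρ/4 from hdq4.symm]
        have h4 : ε * (bar y₀ α q - C) ≤ ε * hsup := by nlinarith
        have h5 : ε * hsup = (M - m₁)/2 := by
          rw [hε_def]; field_simp
        have h6 : v q ≤ m₁ + (M - m₁)/2 := by
          show z q + ε * (bar y₀ α q - C) ≤ m₁ + (M - m₁)/2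
          linarith
        have hgt' : M < z q + ε * (bar y₀ α q - C) := hgt
        linarith [h1, h4, h5, hm₁lt, hgt']
      · have hU : IsOpen {x : E3 | ρ/4 < d x ∧ d x < ρ} :=
          (isOpen_lt continuous_const hdcont).inter (isOpen_lt hdcont continuous_const)
        have hloc : IsLocalMax v q := by
          have hmem : {x : E3 | ρ/4 < d x ∧ d x < ρ} ∈ nhds q := hU.mem_nhds ⟨hdq4, hdq⟩
          filter_upwards [hmem] with t ht
          exact isMaxOn_iff.mp hqmax t ⟨ht.1.le, ht.2.le⟩
        have hneg := isLocalMax_elliptic hvsmooth (w q) (hwpos q).posSemidef (B q) hloc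
        have hLv1 : (∑ i, ∑ j, w q i j * pd j (pd i v) q)
            = (∑ i, ∑ j, w q i j * pd j (pd i z) q)
              + ε * ∑ i, ∑ j, w q i j * pd j (pd i (bar y₀ α)) q := by
          rw [← sum_split]
          refine Finset.sum_congr rfl fun i _ => ?_
          rw [← sum_split]
          refine Finset.sum_congr rfl fun j _ => ?_
          rw [hvpd2]; ring
        have hLv2 : (∑ i, B q i * pd i v q)
            = (∑ i, B q i * pd i z q) + ε * ∑ i, B q i * pd i (bar y₀ α) q := by
          rw [← sum_split]
          refine Finset.sum_congr rfl fun i _ => ?_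
          rw [hvpd]; ring
        have h0 := heq q
        have hpos := hLbar q hqA
        have hprod := mul_pos hεpos hpos
        have hdistrib : ε * ((∑ i, ∑ j, w q i j * pd j (pd i (bar y₀ α)) q)
            + ∑ i, B q i * pd i (bar y₀ α) q)
            = ε * (∑ i, ∑ j, w q i j * pd j (pd i (bar y₀ α)) q)
              + ε * ∑ i, B q i * pd i (bar y₀ α) q := by ring
        rw [hdistrib] at hprod
        rw [hLv1, hLv2] at hneg
        linarith
    intro x hx
    exact le_trans (isMaxOn_iff.mp hqmax x hx) hqle
  -- Hopf boundary point argument at p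
  have hbarp : bar y₀ α p = C := by
    show Real.exp (-(α * ∑ i, (p i - y₀ i)^2)) = C
    rw [hCdef, show (∑ i, (p i - y₀ i)^2) = ρ from (hρ ▸ rfl)]
  have hvp : v p = M := by
    show z p + ε * (bar y₀ α p - C) = M
    rw [hbarp, hpK.1]; ring
  have hd_line : ∀ t : ℝ, d (p + t • (y₀ - p)) = (1-t)^2 * ρ := by
    intro t
    show (∑ i, ((p + t • (y₀ - p)) i - y₀ i)^2) = _
    have hterm : ∀ i : Fin 3, ((p + t • (y₀ - p)) i - y₀ i)^2 = (1-t)^2 * (p i - y₀ i)^2 := by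
      intro i
      simp only [Pi.add_apply, Pi.smul_apply, Pi.sub_apply, smul_eq_mul]
      ring
    rw [Finset.sum_congr rfl fun i _ => hterm i, ← Finset.mul_sum]
  have hlineA : ∀ t ∈ Set.Ioo (0:ℝ) (1/2), (p + t • (y₀ - p)) ∈ A := by
    intro t ht
    obtain ⟨ht1, ht2⟩ := ht
    constructor
    · rw [hd_line]
      nlinarith [mul_pos hρpos (mul_pos (show (0:ℝ) < 1/2 - t by linarith)
        (show (0:ℝ) < 3/2 - t by linarith))]
    · rw [hd_line]
      nlinarith [mul_pos hρpos (mul_pos ht1 (show (0:ℝ) < 2 - t by linarith))]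
  have h0pt : p + (0:ℝ) • (y₀ - p) = p := by simp
  have hφle : ∀ t ∈ Set.Ioo (0:ℝ) (1/2), v (p + t • (y₀ - p)) ≤ v (p + (0:ℝ) • (y₀ - p)) := by
    intro t ht
    rw [h0pt, hvp]
    exact hvle _ (hlineA t ht)
  have hφd : HasDerivAt (fun t : ℝ => v (p + t • (y₀ - p))) (fderiv ℝ v p (y₀ - p)) 0 := by
    have := hasDerivAt_line (hvsmooth.differentiable (by simp)) p (y₀ - p) 0
    rwa [h0pt] at this
  have hDle : fderiv ℝ v p (y₀ - p) ≤ 0 := isLocalMax_slope_nonpos hφd hφle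
  have hzmax_p : ∀ i, pd i z p = 0 := by
    intro i
    have hploc : IsLocalMax z p :=
      Filter.Eventually.of_forall (fun x => le_trans (hpmax x) (le_of_eq hpK.1.symm))
    rw [pd, hploc.fderiv_eq_zero]
    simp
  have hD : fderiv ℝ v p (y₀ - p) = ε * (2*α) * C * ρ := by
    rw [fderiv_eq_sum_pd (hvsmooth.differentiable (by simp) p) _]
    have hterm : ∀ i, (y₀ - p) i * pd i v p = ε * (2*α) * C * (p i - y₀ i)^2 := by
      intro i
      rw [hvpd, hzmax_p, bar_pd, hbarp]
      simp only [Pi.sub_apply]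
      ring
    rw [Finset.sum_congr rfl fun i _ => hterm i, ← Finset.mul_sum]
  have hDpos : 0 < ε * (2*α) * C * ρ := by positivity
  rw [hD] at hDle
  linarith

theorem stmt15
    (η : (Fin 3 → ℝ) → Fin 3 → ℝ)
    (hη : ∀ m, ContDiff ℝ (⊤ : ℕ∞) (fun x => η x m))
    -- `η` is a 1-form on the torus
    (hηper : ∀ x i m, η (x + ee i) m = η x m)
    -- `η` is closed
    (hηclosed : ∀ x i j, pd i (fun y => η y j) x = pd j (fun y => η y i) x)
    (wInv : (Fin 3 → ℝ) → Matrix (Fin 3) (Fin 3) ℝ)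
    (B : (Fin 3 → ℝ) → Fin 3 → ℝ) (lam : (Fin 3 → ℝ) → ℝ)
    (hw : ∀ i j, Continuous fun x => wInv x i j)
    (hwpos : ∀ x, (wInv x).PosDef)
    (hB : ∀ i, Continuous fun x => B x i)
    (hlam : ∀ x, 0 < lam x)
    -- the coefficients come from a warped product: they are independent of `θ`
    (hwθ : ∀ x (t : ℝ), wInv (x + t • ee 2) = wInv x)
    (hBθ : ∀ x (t : ℝ), B (x + t • ee 2) = B x)
    (hlamθ : ∀ x (t : ℝ), lam (x + t • ee 2) = lam x)
    -- `η` is in the kernel of the divergence-type operator `δ`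
    (hδ : ∀ x, (lam x)⁻¹ *
      (∑ i, ∑ j, wInv x i j * pd j (fun y => η y i) x + ∑ i, B x i * η x i) = 0) :
    -- then `z = η_θ` solves `w^{ij} z_{ij} + B^i z_i = 0`, hence is constant
    (∀ x, ∑ i, ∑ j, wInv x i j * pd j (fun y => pd i (fun y' => η y' 2) y) x
        + ∑ i, B x i * pd i (fun y => η y 2) x = 0)
    ∧ ∃ k : ℝ, ∀ x, η x 2 = k := by
  have hT : ∀ x', (∑ i, ∑ j, wInv x' i j * pd j (fun y => η y i) x')
      + ∑ i, B x' i * η x' i = 0 := by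
    intro x'
    rcases mul_eq_zero.mp (hδ x') with h | h
    · exact absurd h (inv_ne_zero (hlam x').ne')
    · exact h
  have key : ∀ x, (∑ i, ∑ j, wInv x i j * pd 2 (pd j (fun y => η y i)) x)
      + ∑ i, B x i * pd 2 (fun y => η y i) x = 0 := by
    intro x
    set g : ℝ → ℝ := fun t => (∑ i, ∑ j, wInv x i j * pd j (fun y => η y i) (x + t • ee 2))
      + ∑ i, B x i * η (x + t • ee 2) i with hg_def
    have hg0 : ∀ t, g t = 0 := by
      intro t
      have h1 := hT (x + t • ee 2)
      rw [hwθ x t, hBθ x t] at h1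
      exact h1
    have hgd : HasDerivAt g ((∑ i, ∑ j, wInv x i j * pd 2 (pd j (fun y => η y i)) x)
        + ∑ i, B x i * pd 2 (fun y => η y i) x) 0 := by
      apply HasDerivAt.add
      · apply HasDerivAt.fun_sum; intro i _
        apply HasDerivAt.fun_sum; intro j _
        have hline := hasDerivAt_line ((contDiff_pd (hη i) j).differentiable (by simp)) x (ee 2) 0
        simp only [zero_smul, add_zero] at hline
        exact hline.const_mul _
      · apply HasDerivAt.fun_sum; intro i _
        have hline := hasDerivAt_line ((hη i).differentiable (by simp)) x (ee 2) 0
        simp only [zero_smul, add_zero] at hline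
        exact hline.const_mul _
    have hzero : HasDerivAt g 0 0 := by
      have hgf : g = fun _ => (0:ℝ) := funext hg0
      rw [hgf]
      exact hasDerivAt_const 0 0
    exact (hgd.unique hzero)
  have hclose : ∀ i : Fin 3, (pd 2 (fun y => η y i)) = (pd i (fun y => η y 2)) :=
    fun i => funext fun y => hηclosed y 2 i
  have part1 : ∀ x, (∑ i, ∑ j, wInv x i j * pd j (fun y => pd i (fun y' => η y' 2) y) x)
      + ∑ i, B x i * pd i (fun y => η y 2) x = 0 := by
    intro x
    have hk := key x
    have e1 : ∀ i j : Fin 3, pd 2 (pd j (fun y => η y i)) x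
        = pd j (fun y => pd i (fun y' => η y' 2) y) x := by
      intro i j
      rw [pd_comm (hη i) 2 j x, hclose i]
    have e2 : ∀ i : Fin 3, pd 2 (fun y => η y i) x = pd i (fun y => η y 2) x :=
      fun i => hηclosed x 2 i
    have hA1 : (∑ i, ∑ j, wInv x i j * pd j (fun y => pd i (fun y' => η y' 2) y) x)
        = ∑ i, ∑ j, wInv x i j * pd 2 (pd j (fun y => η y i)) x :=
      Finset.sum_congr rfl fun i _ => Finset.sum_congr rfl fun j _ => by rw [e1]
    have hA2 : (∑ i, B x i * pd i (fun y => η y 2) x)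
        = ∑ i, B x i * pd 2 (fun y => η y i) x :=
      Finset.sum_congr rfl fun i _ => by rw [e2]
    rw [hA1, hA2]
    exact hk
  refine ⟨part1, ?_⟩
  obtain ⟨k, hk⟩ := elliptic_const (fun x => η x 2) (hη 2) (fun x i => hηper x i 2)
    wInv B hw hwpos hB part1
  exact ⟨k, hk⟩


end
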